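/- arXiv:2306.09444 — 3 statements merged into one kernel-verified Lean document; each statement's English description precedes it below -/
import Mathlib

section
/- (PPT criterion / Peres–Horodecki, necessity) If a bipartite density matrix ρ on ℂ^{p_A·p_B} is separable, then its partial transpose ρ^{T_B} is positive semidefinite. -/
/-! Partial transposition is linear and sends `A ⊗ₖ B` to `A ⊗ₖ Bᵀ`. Since transposition preserves
positive semidefiniteness, it maps a separable state to a nonnegative combination of Kronecker
products of positive semidefinite matrices, which is positive semidefinite. -/

open Matrix Finset
open scoped Kronecker ComplexOrder

def IsDensity {p : Type*} [Fintype p] (ρ : Matrix p p ℂ) : Prop :=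
  ρ.PosSemidef ∧ ρ.trace = 1

def IsSepState {pA pB : ℕ} (ρ : Matrix (Fin pA × Fin pB) (Fin pA × Fin pB) ℂ) : Prop :=
  ∃ (n : ℕ) (q : Fin n → ℝ) (σA : Fin n → Matrix (Fin pA) (Fin pA) ℂ)
    (σB : Fin n → Matrix (Fin pB) (Fin pB) ℂ),
    (∀ j, 0 ≤ q j) ∧ (∑ j, q j) = 1 ∧
    (∀ j, IsDensity (σA j)) ∧ (∀ j, IsDensity (σB j)) ∧
    ρ = ∑ j, (q j : ℂ) • (σA j ⊗ₖ σB j)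


/-- Partial transpose with respect to the second (B) subsystem. -/
def ptB {pA pB : ℕ} (ρ : Matrix (Fin pA × Fin pB) (Fin pA × Fin pB) ℂ) :
    Matrix (Fin pA × Fin pB) (Fin pA × Fin pB) ℂ :=
  Matrix.of fun x y => ρ (x.1, y.2) (y.1, x.2)

section PartialTranspose

variable {pA pB : ℕ}

lemma ptB_kronecker (A : Matrix (Fin pA) (Fin pA) ℂ) (B : Matrix (Fin pB) (Fin pB) ℂ) :
    ptB (A ⊗ₖ B) = A ⊗ₖ Bᵀ := by
  ext x y
  simp [ptB, kroneckerMap_apply]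

lemma ptB_smul (c : ℂ) (ρ : Matrix (Fin pA × Fin pB) (Fin pA × Fin pB) ℂ) :
    ptB (c • ρ) = c • ptB ρ := by
  ext x y
  simp [ptB]

lemma ptB_sum {ι : Type*} (s : Finset ι)
    (ρ : ι → Matrix (Fin pA × Fin pB) (Fin pA × Fin pB) ℂ) :
    ptB (∑ i ∈ s, ρ i) = ∑ i ∈ s, ptB (ρ i) := by
  ext x y
  simp [ptB, Matrix.sum_apply]

end PartialTranspose

theorem ppt_criterion_necessity_general {pA pB : ℕ}
    (ρ : Matrix (Fin pA × Fin pB) (Fin pA × Fin pB) ℂ)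
    (hsep : IsSepState ρ) : (ptB ρ).PosSemidef := by
  obtain ⟨n, q, σA, σB, hq, -, hσA, hσB, rfl⟩ := hsep
  simp only [ptB_sum, ptB_smul, ptB_kronecker]
  exact posSemidef_sum _ fun j _ =>
    ((hσA j).1.kronecker (hσB j).1.transpose).smul (by exact_mod_cast hq j)

theorem ppt_criterion_necessity {pA pB : ℕ}
    (ρ : Matrix (Fin pA × Fin pB) (Fin pA × Fin pB) ℂ)
    (hρ : IsDensity ρ) (hsep : IsSepState ρ) : (ptB ρ).PosSemidef :=
  ppt_criterion_necessity_general ρ hsep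
end

section
/- (Existence of entanglement witnesses) If ρ is a bipartite density matrix that is not separable, then there exists a Hermitian matrix W such that tr(W ρ_S) ≥ 0 for every separable density matrix ρ_S, and tr(W ρ) < 0. -/
/-! Separable states are the convex hull of the product states `σA ⊗ₖ σB`. Density matrices form
a compact set, hence so do product states, and by Carathéodory's theorem so does their convex
hull. Hahn–Banach then strictly separates a non-separable `ρ` from it: `Re f ρ < u < Re f σ` for a
continuous ℂ-linear `f`. On Hermitian matrices `Re f` is `X ↦ tr (W₀ * X)` for a Hermitian `W₀`,
and since states have trace one, `W₀ - u • 1` is the witness. -/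

open Matrix Finset
open scoped Kronecker ComplexOrder

section Caratheodory

variable {𝕜 E : Type*} [Field 𝕜] [LinearOrder 𝕜] [IsStrictOrderedRing 𝕜] [AddCommGroup E]
  [Module 𝕜 E]

theorem mem_convexHull_iff_exists_fin {s : Set E} {x : E} :
    x ∈ convexHull 𝕜 s ↔ ∃ (n : ℕ) (w : Fin n → 𝕜) (z : Fin n → E), (∀ i, 0 ≤ w i) ∧
      ∑ i, w i = 1 ∧ (∀ i, z i ∈ s) ∧ ∑ i, w i • z i = x := by
  refine ⟨fun hx => ?_, fun ⟨n, w, z, hw₀, hw₁, hz, hx⟩ =>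
    mem_convexHull_of_exists_fintype w z hw₀ hw₁ hz hx⟩
  obtain ⟨ι, _, w, z, hw₀, hw₁, hz, rfl⟩ := mem_convexHull_iff_exists_fintype.mp hx
  let e := (Fintype.equivFin ι).symm
  exact ⟨Fintype.card ι, w ∘ e, z ∘ e, fun i => hw₀ _, by rwa [Function.comp_def, e.sum_comp],
    fun i => hz _, e.sum_comp fun i => w i • z i⟩

/-- Carathéodory: `finrank 𝕜 E + 1` points suffice. -/
theorem convexHull_eq_biUnion_image_stdSimplex [FiniteDimensional 𝕜 E] (s : Set E) :
    convexHull 𝕜 s = ⋃ n ∈ range (Module.finrank 𝕜 E + 2),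
      (fun p : (Fin n → 𝕜) × (Fin n → E) => ∑ i, p.1 i • p.2 i) ''
        (stdSimplex 𝕜 (Fin n) ×ˢ Set.univ.pi fun _ => s) := by
  ext x
  simp only [Set.mem_iUnion, Set.mem_image, Set.mem_prod, Set.mem_univ_pi, Prod.exists,
    mem_range, exists_prop]
  constructor
  · intro hx
    obtain ⟨ι, _, z, w, hzs, hz, hw₀, hw₁, rfl⟩ := eq_pos_convex_span_of_mem_convexHull hx
    let e := (Fintype.equivFin ι).symm
    have hcard : Fintype.card ι ≤ Module.finrank 𝕜 E + 1 :=
      hz.card_le_finrank_succ.trans (Nat.succ_le_succ (Submodule.finrank_le _))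
    refine ⟨Fintype.card ι, by omega, w ∘ e, z ∘ e,
      ⟨⟨fun i => (hw₀ _).le, by rwa [Function.comp_def, e.sum_comp]⟩,
        fun i => hzs (Set.mem_range_self _)⟩, e.sum_comp fun i => w i • z i⟩
  · rintro ⟨n, -, w, z, ⟨⟨hw₀, hw₁⟩, hz⟩, rfl⟩
    exact mem_convexHull_of_exists_fintype w z hw₀ hw₁ hz rfl

end Caratheodory

theorem IsCompact.convexHull {E : Type*} [AddCommGroup E] [Module ℝ E] [FiniteDimensional ℝ E]
    [TopologicalSpace E] [ContinuousAdd E] [ContinuousSMul ℝ E] {s : Set E} (hs : IsCompact s) :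
    IsCompact (convexHull ℝ s) := by
  rw [convexHull_eq_biUnion_image_stdSimplex]
  exact (range _).isCompact_biUnion fun n _ =>
    ((isCompact_stdSimplex ℝ _).prod (isCompact_univ_pi fun _ => hs)).image (by fun_prop)

instance Matrix.locallyConvexSpace {R m n 𝕜 : Type*} [Semiring R] [PartialOrder R]
    [AddCommMonoid 𝕜] [Module R 𝕜] [TopologicalSpace 𝕜] [LocallyConvexSpace R 𝕜] :
    LocallyConvexSpace R (Matrix m n 𝕜) :=
  Pi.locallyConvexSpace

section DensityMatrices

variable {p : Type*}

theorem Matrix.PosSemidef.normSq_apply_le {σ : Matrix p p ℂ} (hσ : σ.PosSemidef) (i j : p) :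
    (Complex.normSq (σ i j) : ℂ) ≤ σ i i * σ j j := by
  have hdet := (hσ.submatrix ![i, j]).det_nonneg
  rw [det_fin_two, submatrix_apply, submatrix_apply, submatrix_apply, submatrix_apply] at hdet
  simp only [Matrix.cons_val_zero, Matrix.cons_val_one] at hdet
  rwa [← hσ.1.apply j i, Complex.star_def, Complex.mul_conj, sub_nonneg] at hdet

variable [Fintype p]

theorem IsDensity.norm_apply_le_one {σ : Matrix p p ℂ} (hσ : IsDensity σ) (i j : p) :
    ‖σ i j‖ ≤ 1 := by
  have hdiag (k : p) : σ k k ≤ 1 :=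
    (single_le_sum (f := fun k => σ k k) (fun _ _ => hσ.1.diag_nonneg) (mem_univ k)).trans_eq hσ.2
  have : (Complex.normSq (σ i j) : ℂ) ≤ 1 :=
    (hσ.1.normSq_apply_le i j).trans
      (mul_le_one₀ (hdiag i) hσ.1.diag_nonneg (hdiag j))
  rw [← Complex.ofReal_one, Complex.real_le_real, Complex.normSq_eq_norm_sq] at this
  exact (sq_le_one_iff₀ (norm_nonneg _)).mp this

theorem isClosed_setOf_isDensity : IsClosed {σ : Matrix p p ℂ | IsDensity σ} := by
  have : {σ : Matrix p p ℂ | IsDensity σ} = {σ | σᴴ = σ} ∩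
      (⋂ x : p → ℂ, {σ | 0 ≤ star x ⬝ᵥ (σ *ᵥ x)}) ∩ {σ | σ.trace = 1} := by
    ext σ
    simp [IsDensity, posSemidef_iff_dotProduct_mulVec, IsHermitian, and_assoc]
  rw [this]
  exact ((isClosed_eq (by fun_prop) continuous_id).inter
    (isClosed_iInter fun x => isClosed_le continuous_const (by fun_prop))).inter
    (isClosed_eq (by fun_prop) continuous_const)

theorem isCompact_setOf_isDensity : IsCompact {σ : Matrix p p ℂ | IsDensity σ} :=
  (isCompact_univ_pi fun _ => isCompact_univ_pi fun _ =>
    isCompact_closedBall (0 : ℂ) 1).of_isClosed_subset isClosed_setOf_isDensity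
    fun _ hσ i _ j _ => mem_closedBall_zero_iff.mpr (hσ.norm_apply_le_one i j)

end DensityMatrices

def separableStates (pA pB : ℕ) : Set (Matrix (Fin pA × Fin pB) (Fin pA × Fin pB) ℂ) :=
  convexHull ℝ (Set.image2 (· ⊗ₖ ·) {σ | IsDensity σ} {σ | IsDensity σ})

theorem isSepState_iff_mem_separableStates {pA pB : ℕ}
    {ρ : Matrix (Fin pA × Fin pB) (Fin pA × Fin pB) ℂ} :
    IsSepState ρ ↔ ρ ∈ separableStates pA pB := by
  simp only [IsSepState, separableStates, mem_convexHull_iff_exists_fin, Set.mem_image2,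
    Set.mem_ofPred_eq, ← Complex.coe_smul]
  constructor
  · rintro ⟨n, q, σA, σB, hq₀, hq₁, hA, hB, rfl⟩
    exact ⟨n, q, fun j => σA j ⊗ₖ σB j, hq₀, hq₁, fun j => ⟨_, hA j, _, hB j, rfl⟩, rfl⟩
  · rintro ⟨n, q, z, hq₀, hq₁, hz, rfl⟩
    choose σA hA σB hB hz using hz
    exact ⟨n, q, σA, σB, hq₀, hq₁, hA, hB, by simp only [hz]⟩

theorem isCompact_separableStates (pA pB : ℕ) : IsCompact (separableStates pA pB) := by
  refine IsCompact.convexHull ?_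
  rw [← Set.image_prod]
  exact (isCompact_setOf_isDensity.prod isCompact_setOf_isDensity).image
    (continuous_matrix fun i j => by simp only [kroneckerMap_apply]; fun_prop)

section TraceDuality

variable {m : Type*} [Fintype m]

theorem Matrix.exists_trace_mul_eq [DecidableEq m] {R : Type*} [CommSemiring R]
    (f : Matrix m m R →ₗ[R] R) :
    ∃ M : Matrix m m R, ∀ X, (M * X).trace = f X := by
  refine ⟨of fun i j => f (single j i 1), fun X => ?_⟩
  have hX : X = ∑ i, ∑ j, X i j • single i j 1 := by
    simpa only [smul_single, smul_eq_mul, mul_one] using matrix_eq_sum_single X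
  conv_rhs => rw [hX]
  simp only [trace, diag, mul_apply, of_apply, map_sum, map_smul, smul_eq_mul, mul_comm]
  exact sum_comm

theorem Matrix.trace_conjTranspose_mul_of_isHermitian (M : Matrix m m ℂ) {X : Matrix m m ℂ}
    (hX : X.IsHermitian) : (Mᴴ * X).trace = star (M * X).trace := by
  rw [← trace_conjTranspose, conjTranspose_mul, hX.eq, trace_mul_comm]

theorem Matrix.exists_isHermitian_trace_mul_eq_re [DecidableEq m] (f : Matrix m m ℂ →ₗ[ℂ] ℂ) :
    ∃ W : Matrix m m ℂ, W.IsHermitian ∧ ∀ X, X.IsHermitian → (W * X).trace = (f X).re := by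
  obtain ⟨M, hM⟩ := exists_trace_mul_eq f
  refine ⟨(2⁻¹ : ℝ) • (M + Mᴴ), ?_, fun X hX => ?_⟩
  · simp [IsHermitian, conjTranspose_smul, add_comm]
  · rw [smul_mul, add_mul, trace_smul, trace_add, trace_conjTranspose_mul_of_isHermitian M hX,
      hM, Complex.star_def, Complex.add_conj, Complex.real_smul]
    push_cast
    ring

end TraceDuality

theorem entanglement_witness_exists {pA pB : ℕ}
    (ρ : Matrix (Fin pA × Fin pB) (Fin pA × Fin pB) ℂ)
    (hρ : IsDensity ρ) (hent : ¬ IsSepState ρ) :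
    ∃ W : Matrix (Fin pA × Fin pB) (Fin pA × Fin pB) ℂ, W.IsHermitian ∧
      (∀ ρS, IsDensity ρS → IsSepState ρS → 0 ≤ (W * ρS).trace) ∧
      (W * ρ).trace < 0 := by
  obtain ⟨f, u, hfρ, hfS⟩ := RCLike.geometric_hahn_banach_point_closed (𝕜 := ℂ)
    (convex_convexHull ℝ _) (isCompact_separableStates pA pB).isClosed
    (mt isSepState_iff_mem_separableStates.mpr hent)
  obtain ⟨W, hW, hWf⟩ := exists_isHermitian_trace_mul_eq_re f.toLinearMap
  have htrace {σ} (hσ : IsDensity σ) : ((W - (u : ℂ) • 1) * σ).trace = ((f σ).re - u : ℝ) := by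
    rw [sub_mul, trace_sub, hWf σ hσ.1.1, smul_mul, one_mul, trace_smul, hσ.2, smul_eq_mul,
      mul_one, Complex.ofReal_sub, ContinuousLinearMap.coe_coe]
  refine ⟨W - (u : ℂ) • 1, ?_, fun σ hσ hsep => ?_, ?_⟩
  · simp [IsHermitian, hW.eq]
  · rw [htrace hσ, Complex.zero_le_real, sub_nonneg]
    exact (hfS σ (isSepState_iff_mem_separableStates.mp hsep)).le
  · rw [htrace hρ, ← Complex.ofReal_zero, Complex.real_lt_real, sub_neg]
    exact hfρ
end

section
/- (Optimal witness detects ρ) Let ρ be a density matrix and ρ̃_S the nearest separable density matrix to ρ in Frobenius norm, with ρ̃_S ≠ ρ. Then the matrix W = (ρ̃_S − ρ − ⟨ρ̃_S, ρ̃_S − ρ⟩·I)/‖ρ̃_S − ρ‖ satisfies tr(W ρ) < 0. -/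
open Matrix Finset
open scoped Kronecker ComplexOrder

noncomputable def frobInner {p : Type*} [Fintype p] (X Y : Matrix p p ℂ) : ℂ :=
  (Xᴴ * Y).trace

noncomputable def frobNorm {p : Type*} [Fintype p] (X : Matrix p p ℂ) : ℝ :=
  Real.sqrt ((Xᴴ * X).trace).re

theorem optimal_witness_detects {pA pB : ℕ}
    (ρ ρS : Matrix (Fin pA × Fin pB) (Fin pA × Fin pB) ℂ)
    (hρ : IsDensity ρ) (hρS : IsDensity ρS) (hsep : IsSepState ρS)
    (hnear : ∀ σ, IsDensity σ → IsSepState σ → frobNorm (ρS - ρ) ≤ frobNorm (σ - ρ))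
    (hne : ρS ≠ ρ) :
    ((((frobNorm (ρS - ρ) : ℝ) : ℂ)⁻¹ •
      (ρS - ρ - frobInner ρS (ρS - ρ) • (1 : Matrix _ _ ℂ)) * ρ)).trace < 0 := by
  set d : Matrix (Fin pA × Fin pB) (Fin pA × Fin pB) ℂ := ρS - ρ with hd
  have hρH : ρᴴ = ρ := hρ.1.1
  have hρSH : ρSᴴ = ρS := hρS.1.1
  have hdH : dᴴ = d := by
    rw [hd, conjTranspose_sub, hρH, hρSH]
  have hdne : d ≠ 0 := sub_ne_zero.mpr hne
  -- the sum of squared norms of entries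
  set S : ℝ := ∑ j, ∑ i, Complex.normSq (d i j) with hS
  have hT : (dᴴ * d).trace = (S : ℂ) := by
    rw [Matrix.trace, hS]
    push_cast
    refine Finset.sum_congr rfl fun j _ => ?_
    rw [Matrix.diag_apply, Matrix.mul_apply]
    refine Finset.sum_congr rfl fun i _ => ?_
    rw [Matrix.conjTranspose_apply, Complex.normSq_eq_conj_mul_self]; rfl
  have hSpos : 0 < S := by
    obtain ⟨i, j, hij⟩ : ∃ i j, d i j ≠ 0 := by
      by_contra h
      push_neg at h
      exact hdne (by ext i j; exact h i j)
    refine Finset.sum_pos' (fun j _ => Finset.sum_nonneg fun i _ => Complex.normSq_nonneg _)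
      ⟨j, Finset.mem_univ _, Finset.sum_pos' (fun i _ => Complex.normSq_nonneg _)
        ⟨i, Finset.mem_univ _, Complex.normSq_pos.mpr hij⟩⟩
  set c : ℝ := frobNorm d with hc
  have hcS : c = Real.sqrt S := by
    rw [hc, frobNorm, hT]
    norm_num
  have hcpos : 0 < c := by rw [hcS]; exact Real.sqrt_pos.mpr hSpos
  have hc2 : c ^ 2 = S := by
    rw [hcS]; exact Real.sq_sqrt hSpos.le
  have htr : ((((c : ℝ) : ℂ)⁻¹ •
      (d - frobInner ρS d • (1 : Matrix _ _ ℂ)) * ρ)).trace = -(c : ℂ) := by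
    have key : ((d - frobInner ρS d • (1 : Matrix _ _ ℂ)) * ρ).trace = -(S : ℂ) := by
      rw [Matrix.sub_mul, Matrix.smul_mul, Matrix.one_mul, Matrix.trace_sub,
        Matrix.trace_smul, hρ.2, smul_eq_mul, mul_one, frobInner, hρSH]
      have : (d * ρ).trace - (ρS * d).trace = -((dᴴ * d).trace) := by
        rw [hdH, Matrix.trace_mul_comm d ρ, ← Matrix.trace_sub, ← Matrix.sub_mul]
        have : ρ - ρS = -d := by rw [hd]; abel
        rw [this, Matrix.neg_mul, Matrix.trace_neg]
      rw [this, hT]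
    rw [Matrix.smul_mul, Matrix.trace_smul, key, smul_eq_mul]
    rw [← hc2]
    push_cast
    field_simp
  rw [htr]
  have : -(c : ℂ) = ((-c : ℝ) : ℂ) := by push_cast; ring
  rw [this, show (0 : ℂ) = ((0 : ℝ) : ℂ) by norm_num, Complex.real_lt_real]
  linarith
end
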